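/- For every natural number n, the number of pairs (a,b) ∈ ℤ² with a² + b² = 5ⁿ equals 4(n+1). -/

import Mathlib

/-!
A Gaussian integer `z` of norm `N(π)ⁿ`, where `π` is a Gaussian prime not dividing its
conjugate, has the form `u πᵃ π̄ᵇ` with `u` a unit and `a + b = n`: `π` divides `z z̄ = N(π)ⁿ`,
hence `z` or `z̄`, and one peels off a factor of norm `N(π)` at a time. The exponent `a` is the
`π`-adic valuation of `z`, so the representation is unique and there are `4(n + 1)` such `z`.
Lattice points on the circle `a² + b² = 5ⁿ` are the Gaussian integers of norm `5ⁿ = N(2 + i)ⁿ`.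
-/

open Zsqrtd Finset.HasAntidiagonal

local notation "ℤ[i]" => GaussianInt

theorem Zsqrtd.irreducible_of_natAbs_norm_prime {d : ℤ} {z : ℤ√d} (hz : z.norm.natAbs.Prime) :
    Irreducible z := by
  refine ⟨fun hu => hz.ne_one (norm_eq_one_iff.2 hu), fun a b hab => ?_⟩
  rw [hab, norm_mul, Int.natAbs_mul, Nat.prime_mul_iff] at hz
  rcases hz with ⟨-, hb⟩ | ⟨-, ha⟩
  · exact Or.inr (norm_eq_one_iff.1 hb)
  · exact Or.inl (norm_eq_one_iff.1 ha)

namespace GaussianInt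

theorem isUnit_iff_mem {u : ℤ[i]} :
    IsUnit u ↔ u ∈ ({1, -1, ⟨0, 1⟩, ⟨0, -1⟩} : Finset ℤ[i]) := by
  rw [← norm_eq_one_iff' (by norm_num)]
  obtain ⟨x, y⟩ := u
  constructor
  · intro h
    have h' : x * x + y * y = 1 := by simpa [Zsqrtd.norm] using h
    have hx : -1 ≤ x ∧ x ≤ 1 := by constructor <;> nlinarith
    have hy : -1 ≤ y ∧ y ≤ 1 := by constructor <;> nlinarith
    obtain ⟨hx1, hx2⟩ := hx
    obtain ⟨hy1, hy2⟩ := hy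
    interval_cases x <;> interval_cases y <;> simp_all <;> decide
  · intro h
    fin_cases h <;> decide

theorem ncard_setOf_isUnit : {u : ℤ[i] | IsUnit u}.ncard = 4 := by
  simp_rw [isUnit_iff_mem, Finset.setOfPred_mem, Set.ncard_coe_finset]
  decide

theorem norm_pow (z : ℤ[i]) (n : ℕ) : (z ^ n).norm = z.norm ^ n :=
  map_pow normMonoidHom z n

theorem dvd_or_star_dvd_of_norm_dvd_norm {π z : ℤ[i]} (hπ : Prime π) (h : π.norm ∣ z.norm) :
    π ∣ z ∨ star π ∣ z := by
  have hdvd : π ∣ z * star z := by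
    rw [← norm_eq_mul_conj]
    exact (Dvd.intro _ (norm_eq_mul_conj π).symm).trans (Int.cast_dvd_cast _ _ h)
  refine (hπ.dvd_or_dvd hdvd).imp id fun h => ?_
  simpa only [starRingEnd_apply, star_star] using map_dvd (starRingEnd ℤ[i]) h

theorem norm_eq_pow_of_mul {c w : ℤ[i]} {m : ℤ} {n : ℕ} (hc : c.norm = m) (hm : m ≠ 0)
    (h : (c * w).norm = m ^ (n + 1)) : w.norm = m ^ n := by
  rw [norm_mul, hc, pow_succ'] at h
  exact mul_left_cancel₀ hm h

theorem norm_mul_pow_mul_star_pow {π u : ℤ[i]} (hu : IsUnit u) (a b : ℕ) :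
    (u * π ^ a * star π ^ b).norm = π.norm ^ (a + b) := by
  rw [norm_mul, norm_mul, norm_pow, norm_pow, norm_conj, (norm_eq_one_iff' (by norm_num) u).2 hu,
    one_mul, pow_add]

section SplitPrime

variable {π : ℤ[i]} (hπ : Prime π)
include hπ

theorem exists_eq_mul_pow_mul_star_pow {n : ℕ} {z : ℤ[i]} (hz : z.norm = π.norm ^ n) :
    ∃ u, IsUnit u ∧ ∃ a b, a + b = n ∧ z = u * π ^ a * star π ^ b := by
  induction n generalizing z with
  | zero =>
    exact ⟨z, (norm_eq_one_iff' (by norm_num) z).1 (by simpa using hz), 0, 0, rfl, by simp⟩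
  | succ n ih =>
    have hπ0 : π.norm ≠ 0 := by simpa [norm_eq_zero] using hπ.ne_zero
    rcases dvd_or_star_dvd_of_norm_dvd_norm hπ (hz ▸ dvd_pow_self _ n.succ_ne_zero) with
      ⟨w, rfl⟩ | ⟨w, rfl⟩
    · obtain ⟨u, hu, a, b, hab, rfl⟩ := ih (norm_eq_pow_of_mul rfl hπ0 hz)
      exact ⟨u, hu, a + 1, b, by omega, by ring⟩
    · obtain ⟨u, hu, a, b, hab, rfl⟩ := ih (norm_eq_pow_of_mul (norm_conj π) hπ0 hz)
      exact ⟨u, hu, a, b + 1, by omega, by ring⟩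

variable (hsplit : ¬π ∣ star π)
include hsplit

theorem emultiplicity_mul_pow_mul_star_pow {u : ℤ[i]} (hu : IsUnit u) (a b : ℕ) :
    emultiplicity π (u * π ^ a * star π ^ b) = a := by
  rw [emultiplicity_mul hπ, emultiplicity_mul hπ, emultiplicity_pow_self_of_prime hπ,
    emultiplicity_pow hπ, emultiplicity_eq_zero.2 hsplit, mul_zero, add_zero,
    emultiplicity_eq_zero.2 fun h => hπ.not_isUnit (isUnit_of_dvd_unit h hu), zero_add]

theorem injOn_mul_pow_mul_star_pow (n : ℕ) :
    Set.InjOn (fun p : ℤ[i] × ℕ × ℕ => p.1 * π ^ p.2.1 * star π ^ p.2.2)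
      ({u | IsUnit u} ×ˢ (antidiagonal n : Set (ℕ × ℕ))) := by
  rintro ⟨u, a, b⟩ ⟨hu, hab⟩ ⟨u', a', b'⟩ ⟨hu', hab'⟩ h
  simp only [Set.mem_ofPred_eq, Finset.mem_coe, mem_antidiagonal] at hu hu' hab hab' h
  have ha : a = a' := by
    have := congrArg (emultiplicity π) h
    rwa [emultiplicity_mul_pow_mul_star_pow hπ hsplit hu,
      emultiplicity_mul_pow_mul_star_pow hπ hsplit hu', Nat.cast_inj] at this
  obtain rfl : b = b' := by omega
  subst ha
  rw [mul_assoc, mul_assoc] at h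
  rw [mul_right_cancel₀ (mul_ne_zero (pow_ne_zero _ hπ.ne_zero)
    (pow_ne_zero _ (star_ne_zero.2 hπ.ne_zero))) h]

theorem ncard_setOf_norm_eq_pow (n : ℕ) :
    {z : ℤ[i] | z.norm = π.norm ^ n}.ncard = 4 * (n + 1) := by
  have himage : {z : ℤ[i] | z.norm = π.norm ^ n} =
      (fun p : ℤ[i] × ℕ × ℕ => p.1 * π ^ p.2.1 * star π ^ p.2.2) ''
        ({u | IsUnit u} ×ˢ (antidiagonal n : Set (ℕ × ℕ))) := by
    ext z
    constructor
    · intro hz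
      obtain ⟨u, hu, a, b, hab, rfl⟩ := exists_eq_mul_pow_mul_star_pow hπ hz
      exact ⟨(u, a, b), ⟨hu, by simpa using hab⟩, rfl⟩
    · rintro ⟨⟨u, a, b⟩, ⟨hu, hab⟩, rfl⟩
      simp only [Finset.mem_coe, mem_antidiagonal] at hab
      rw [Set.mem_ofPred_eq, ← hab]
      exact norm_mul_pow_mul_star_pow hu a b
  rw [himage, (injOn_mul_pow_mul_star_pow hπ hsplit n).ncard_image, Set.ncard_prod,
    ncard_setOf_isUnit, Set.ncard_coe_finset, Finset.Nat.card_antidiagonal]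

end SplitPrime

theorem ncard_setOf_sq_add_sq_eq (m : ℤ) :
    {p : ℤ × ℤ | p.1 ^ 2 + p.2 ^ 2 = m}.ncard = {z : ℤ[i] | z.norm = m}.ncard := by
  refine Set.ncard_congr (fun p _ => ⟨p.1, p.2⟩) (fun p hp => ?_) (fun p q _ _ h => ?_)
    fun z hz => ⟨(z.re, z.im), ?_, rfl⟩
  · rw [Set.mem_ofPred_eq, ← hp, Zsqrtd.norm]
    ring
  · exact Prod.ext (congrArg Zsqrtd.re h) (congrArg Zsqrtd.im h)
  · rw [Set.mem_ofPred_eq, ← hz, Zsqrtd.norm]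
    ring

theorem prime_two_add_I : Prime (⟨2, 1⟩ : ℤ[i]) :=
  irreducible_iff_prime.1 (irreducible_of_natAbs_norm_prime (by decide))

/-- Otherwise `2 + i` would divide `(2 + i) + (2 - i) = 4`, but `N(2 + i) = 5` does not
divide `16`. -/
theorem not_two_add_I_dvd_star : ¬(⟨2, 1⟩ : ℤ[i]) ∣ star ⟨2, 1⟩ := fun h =>
  absurd (map_dvd normMonoidHom (dvd_add dvd_rfl h)) (by decide)

end GaussianInt

theorem card_lattice_points_five_pow (n : ℕ) :
    {p : ℤ × ℤ | p.1 ^ 2 + p.2 ^ 2 = 5 ^ n}.ncard = 4 * (n + 1) := by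
  rw [GaussianInt.ncard_setOf_sq_add_sq_eq, show (5 : ℤ) = (⟨2, 1⟩ : ℤ[i]).norm from rfl]
  exact GaussianInt.ncard_setOf_norm_eq_pow GaussianInt.prime_two_add_I
    GaussianInt.not_two_add_I_dvd_star n
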